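/- Let A be a bounded linear operator on H, let p ≥ 2 be a real exponent, let t ∈ [0,1], and let S : [0,∞) × [0,∞) → [0,∞) be monotone increasing in each argument and satisfy S(a,b) ≤ t·a + (1−t)·b for all a, b ≥ 0. Then N_{S,p}(A) ≤ ber(t·|A|^p + (1−t)·|A*|^p), where |A|^p and |A*|^p are defined by continuous functional calculus. -/

import Mathlib

noncomputable section
open ContinuousLinearMap

variable {H : Type*} [NormedAddCommGroup H] [InnerProductSpace ℂ H] [CompleteSpace H]
variable {Ω : Type*}

/-- The Berezin radius `ber(A) = sup_{λ∈Ω} |⟨A κ(λ), κ(λ)⟩|`. -/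
def ber (κ : Ω → H) (A : H →L[ℂ] H) : ℝ :=
  ⨆ l : Ω, ‖(inner ℂ (A (κ l)) (κ l) : ℂ)‖

/-- The Berezin norm `‖A‖_ber = sup_{λ,μ∈Ω} |⟨A κ(λ), κ(μ)⟩|`. -/
def berNorm (κ : Ω → H) (A : H →L[ℂ] H) : ℝ :=
  ⨆ q : Ω × Ω, ‖(inner ℂ (A (κ q.1)) (κ q.2) : ℂ)‖

/-- `N_{S,p}(A) = sup_{λ,μ∈Ω} S(|⟨A κ(λ), κ(μ)⟩|^p, |⟨A* κ(λ), κ(μ)⟩|^p)`. -/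
def NS (S : ℝ → ℝ → ℝ) (p : ℝ) (κ : Ω → H) (A : H →L[ℂ] H) : ℝ :=
  ⨆ q : Ω × Ω, S (‖(inner ℂ (A (κ q.1)) (κ q.2) : ℂ)‖ ^ p)
    (‖(inner ℂ ((adjoint A) (κ q.1)) (κ q.2) : ℂ)‖ ^ p)

/-- `|X| = (X*X)^{1/2}` via continuous functional calculus. -/
def absOp (X : H →L[ℂ] H) : H →L[ℂ] H := cfc Real.sqrt (adjoint X * X)

/-- `h(|X|)^r` : continuous functional calculus of `|X|` applied to `s ↦ h(s)^r`. -/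
def opApply (h : ℝ → ℝ) (r : ℝ) (X : H →L[ℂ] H) : H →L[ℂ] H :=
  cfc (fun s : ℝ => h s ^ r) (absOp X)

lemma tangent_ineq {a s r : ℝ} (ha : 0 < a) (hs : 0 ≤ s) (hr : 1 ≤ r) :
    r * a ^ (r - 1) * s - (r - 1) * a ^ r ≤ s ^ r := by
  have h1 : (-1 : ℝ) ≤ s / a - 1 := by
    have : 0 ≤ s / a := div_nonneg hs ha.le
    linarith
  have hb := one_add_mul_self_le_rpow_one_add h1 hr
  have h2 : (1 + (s / a - 1)) = s / a := by ring
  rw [h2, Real.div_rpow hs ha.le] at hb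
  have har : 0 < a ^ r := Real.rpow_pos_of_pos ha r
  have h3 : a ^ (r - 1) * a = a ^ r := by
    rw [← Real.rpow_add_one ha.ne' (r - 1), sub_add_cancel]
  have h4 : a ^ r * (s / a) = a ^ (r - 1) * s := by
    field_simp
    rw [← h3]; ring
  have h5 := mul_le_mul_of_nonneg_left hb har.le
  rw [mul_div_cancel₀ _ har.ne'] at h5
  nlinarith

open scoped InnerProduct in
lemma inner_rpow_le (T : H →L[ℂ] H) (hT : 0 ≤ T) (x : H) (hx : ‖x‖ = 1)
    (r : ℝ) (hr : 1 ≤ r) :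
    (Complex.re (inner ℂ (T x) x : ℂ)) ^ r
      ≤ Complex.re (inner ℂ (cfc (fun s : ℝ => s ^ r) T x) x : ℂ) := by
  have hTpos : T.IsPositive := (nonneg_iff_isPositive T).mp hT
  have hTsa : IsSelfAdjoint T := hTpos.isSelfAdjoint
  have hspec : ∀ s ∈ spectrum ℝ T, 0 ≤ s := fun s hs => spectrum_nonneg_of_nonneg hT hs
  have hrcont : ContinuousOn (fun s : ℝ => s ^ r) (spectrum ℝ T) :=
    (Real.continuous_rpow_const (by linarith)).continuousOn
  set a : ℝ := Complex.re (inner ℂ (T x) x : ℂ) with ha_def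
  have ha : 0 ≤ a := hTpos.re_inner_nonneg_left x
  have hnonneg : (0 : H →L[ℂ] H) ≤ cfc (fun s : ℝ => s ^ r) T :=
    cfc_nonneg fun s hs => Real.rpow_nonneg (hspec s hs) r
  rcases eq_or_lt_of_le ha with heq | hlt
  · rw [← heq, Real.zero_rpow (by linarith)]
    exact ((nonneg_iff_isPositive _).mp hnonneg).re_inner_nonneg_left x
  · set c : ℝ := r * a ^ (r - 1) with hc_def
    set d : ℝ := (r - 1) * a ^ r with hd_def
    have hmono : cfc (fun s : ℝ => c * s - d) T ≤ cfc (fun s : ℝ => s ^ r) T := by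
      refine cfc_mono (fun s hs => ?_) (by fun_prop) hrcont
      simpa [hc_def, hd_def, mul_comm] using tangent_ineq hlt (hspec s hs) hr
    have hcalc : cfc (fun s : ℝ => c * s - d) T
        = c • T - algebraMap ℝ (H →L[ℂ] H) d := by
      rw [cfc_sub _ _ T (by fun_prop) (by fun_prop)]
      rw [cfc_const_mul c (fun s : ℝ => s) T (by fun_prop), cfc_id' ℝ T, cfc_const d T]
    have hsub : (0 : H →L[ℂ] H) ≤ cfc (fun s : ℝ => s ^ r) T
        - cfc (fun s : ℝ => c * s - d) T := sub_nonneg.mpr hmono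
    have hinner := ((nonneg_iff_isPositive _).mp hsub).re_inner_nonneg_left x
    have hx2 : (inner ℂ x x : ℂ) = 1 := by
      rw [inner_self_eq_norm_sq_to_K, hx]; norm_num
    have hexp : Complex.re (inner ℂ (cfc (fun s : ℝ => c * s - d) T x) x : ℂ) = c * a - d := by
      rw [hcalc]
      have : (c • T - algebraMap ℝ (H →L[ℂ] H) d) x = c • T x - d • x := by
        simp [Algebra.algebraMap_eq_smul_one]
      rw [this, inner_sub_left]
      have h1 : (inner ℂ ((c : ℝ) • T x) x : ℂ) = (c : ℂ) * inner ℂ (T x) x := by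
        rw [RCLike.real_smul_eq_coe_smul (K := ℂ), inner_smul_left]; simp
      have h2 : (inner ℂ ((d : ℝ) • x) x : ℂ) = (d : ℂ) * inner ℂ x x := by
        rw [RCLike.real_smul_eq_coe_smul (K := ℂ), inner_smul_left]; simp
      rw [h1, h2, hx2]
      simp [ha_def]
    have hfinal : c * a - d ≤ Complex.re (inner ℂ (cfc (fun s : ℝ => s ^ r) T x) x : ℂ) := by
      rw [← hexp]
      have : (cfc (fun s : ℝ => s ^ r) T - cfc (fun s : ℝ => c * s - d) T) x
          = cfc (fun s : ℝ => s ^ r) T x - cfc (fun s : ℝ => c * s - d) T x := rfl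
      rw [this, inner_sub_left] at hinner
      simp only [Complex.sub_re, map_sub, RCLike.re_to_complex] at hinner ⊢
      linarith [hinner]
    have : c * a - d = a ^ r := by
      rw [hc_def, hd_def]
      have h3 : a ^ (r - 1) * a = a ^ r := by
        rw [← Real.rpow_add_one hlt.ne' (r - 1), sub_add_cancel]
      nlinarith
    linarith [hfinal]

lemma norm_apply_rpow_le (X : H →L[ℂ] H) (x : H) (hx : ‖x‖ = 1) (p : ℝ) (hp : 2 ≤ p) :
    ‖X x‖ ^ p ≤ (Complex.re (inner ℂ (opApply (fun s => s) p X x) x : ℂ)) := by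
  set T : H →L[ℂ] H := adjoint X * X with hT_def
  have hT : (0 : H →L[ℂ] H) ≤ T := by
    simpa [hT_def, star_eq_adjoint] using star_mul_self_nonneg X
  have hTsa : IsSelfAdjoint T := ((nonneg_iff_isPositive T).mp hT).isSelfAdjoint
  have hspec : ∀ s ∈ spectrum ℝ T, 0 ≤ s := fun s hs => spectrum_nonneg_of_nonneg hT hs
  have hp0 : (0 : ℝ) ≤ p := by linarith
  have hcomp : opApply (fun s => s) p X = cfc (fun s : ℝ => s ^ (p / 2)) T := by
    have h1 : opApply (fun s => s) p X = cfc ((fun s : ℝ => s ^ p) <| Real.sqrt ·) T := by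
      rw [opApply, absOp, ← hT_def,
        cfc_comp' (fun s : ℝ => s ^ p) Real.sqrt T
          ((Real.continuous_rpow_const hp0).continuousOn) Real.continuous_sqrt.continuousOn hTsa]
    rw [h1]
    apply cfc_congr
    intro s hs
    have hs0 : 0 ≤ s := hspec s hs
    simp only
    rw [Real.sqrt_eq_rpow, ← Real.rpow_mul hs0]
    ring_nf
  have hinner : Complex.re (inner ℂ (T x) x : ℂ) = ‖X x‖ ^ (2 : ℕ) := by
    have : (inner ℂ (T x) x : ℂ) = inner ℂ (X x) (X x) := by
      rw [hT_def, mul_apply_eq_comp, adjoint_inner_left]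
    rw [this]
    exact inner_self_eq_norm_sq (𝕜 := ℂ) (X x)
  have key := inner_rpow_le T hT x hx (p / 2) (by linarith)
  rw [hcomp]
  refine le_trans (le_of_eq ?_) key
  rw [hinner]
  rw [← Real.rpow_natCast (‖X x‖) 2, ← Real.rpow_mul (norm_nonneg _)]
  ring_nf

theorem stmt1 [Nonempty Ω] (κ : Ω → H) (hκ : ∀ l, ‖κ l‖ = 1)
    (A : H →L[ℂ] H) (p : ℝ) (hp : 2 ≤ p)
    (t : ℝ) (ht0 : 0 ≤ t) (ht1 : t ≤ 1)
    (S : ℝ → ℝ → ℝ)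
    (hS_nonneg : ∀ a b : ℝ, 0 ≤ a → 0 ≤ b → 0 ≤ S a b)
    (hS_mono₁ : ∀ b ∈ Set.Ici (0 : ℝ), MonotoneOn (fun a => S a b) (Set.Ici 0))
    (hS_mono₂ : ∀ a ∈ Set.Ici (0 : ℝ), MonotoneOn (fun b => S a b) (Set.Ici 0))
    (hS_le : ∀ a b : ℝ, 0 ≤ a → 0 ≤ b → S a b ≤ t * a + (1 - t) * b) :
    NS S p κ A
      ≤ ber κ (t • opApply (fun s => s) p A + (1 - t) • opApply (fun s => s) p (adjoint A)) := by
  set P : H →L[ℂ] H := opApply (fun s => s) p A with hP_def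
  set Q : H →L[ℂ] H := opApply (fun s => s) p (adjoint A) with hQ_def
  set B : H →L[ℂ] H := t • P + (1 - t) • Q with hB_def
  have hp0 : (0 : ℝ) ≤ p := by linarith
  have hbdd : BddAbove (Set.range fun l : Ω => ‖(inner ℂ (B (κ l)) (κ l) : ℂ)‖) := by
    refine ⟨‖B‖, ?_⟩
    rintro x ⟨l, rfl⟩
    calc ‖(inner ℂ (B (κ l)) (κ l) : ℂ)‖ ≤ ‖B (κ l)‖ * ‖κ l‖ := norm_inner_le_norm _ _
      _ ≤ (‖B‖ * ‖κ l‖) * ‖κ l‖ := by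
          exact mul_le_mul_of_nonneg_right (B.le_opNorm (κ l)) (norm_nonneg _)
      _ = ‖B‖ := by rw [hκ l]; ring
  refine ciSup_le fun q => ?_
  set x := κ q.1
  set y := κ q.2
  have hx : ‖x‖ = 1 := hκ q.1
  have hy : ‖y‖ = 1 := hκ q.2
  -- Cauchy–Schwarz bounds
  have hcs1 : ‖(inner ℂ (A x) y : ℂ)‖ ≤ ‖A x‖ := by
    calc ‖(inner ℂ (A x) y : ℂ)‖ ≤ ‖A x‖ * ‖y‖ := norm_inner_le_norm _ _
      _ = ‖A x‖ := by rw [hy, mul_one]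
  have hcs2 : ‖(inner ℂ ((adjoint A) x) y : ℂ)‖ ≤ ‖(adjoint A) x‖ := by
    calc ‖(inner ℂ ((adjoint A) x) y : ℂ)‖ ≤ ‖(adjoint A) x‖ * ‖y‖ := norm_inner_le_norm _ _
      _ = ‖(adjoint A) x‖ := by rw [hy, mul_one]
  have h1 : ‖(inner ℂ (A x) y : ℂ)‖ ^ p ≤ Complex.re (inner ℂ (P x) x : ℂ) :=
    le_trans (Real.rpow_le_rpow (norm_nonneg _) hcs1 hp0) (norm_apply_rpow_le A x hx p hp)
  have h2 : ‖(inner ℂ ((adjoint A) x) y : ℂ)‖ ^ p ≤ Complex.re (inner ℂ (Q x) x : ℂ) :=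
    le_trans (Real.rpow_le_rpow (norm_nonneg _) hcs2 hp0)
      (norm_apply_rpow_le (adjoint A) x hx p hp)
  have hre : Complex.re (inner ℂ (B x) x : ℂ)
      = t * Complex.re (inner ℂ (P x) x : ℂ) + (1 - t) * Complex.re (inner ℂ (Q x) x : ℂ) := by
    have hBx : B x = t • P x + (1 - t) • Q x := rfl
    have e1 : (inner ℂ ((t : ℝ) • P x) x : ℂ) = (t : ℂ) * inner ℂ (P x) x := by
      rw [RCLike.real_smul_eq_coe_smul (K := ℂ), inner_smul_left]; simp
    have e2 : (inner ℂ (((1 - t) : ℝ) • Q x) x : ℂ) = ((1 - t : ℝ) : ℂ) * inner ℂ (Q x) x := by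
      rw [RCLike.real_smul_eq_coe_smul (K := ℂ), inner_smul_left]; simp
    rw [hBx, inner_add_left, e1, e2]
    simp [Complex.add_re, Complex.mul_re]
  have hstep : S (‖(inner ℂ (A x) y : ℂ)‖ ^ p) (‖(inner ℂ ((adjoint A) x) y : ℂ)‖ ^ p)
      ≤ Complex.re (inner ℂ (B x) x : ℂ) := by
    have hu : (0 : ℝ) ≤ ‖(inner ℂ (A x) y : ℂ)‖ ^ p := Real.rpow_nonneg (norm_nonneg _) p
    have hv : (0 : ℝ) ≤ ‖(inner ℂ ((adjoint A) x) y : ℂ)‖ ^ p := Real.rpow_nonneg (norm_nonneg _) p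
    calc S (‖(inner ℂ (A x) y : ℂ)‖ ^ p) (‖(inner ℂ ((adjoint A) x) y : ℂ)‖ ^ p)
        ≤ t * (‖(inner ℂ (A x) y : ℂ)‖ ^ p) + (1 - t) * (‖(inner ℂ ((adjoint A) x) y : ℂ)‖ ^ p) :=
          hS_le _ _ hu hv
      _ ≤ t * Complex.re (inner ℂ (P x) x : ℂ) + (1 - t) * Complex.re (inner ℂ (Q x) x : ℂ) := by
          have := mul_le_mul_of_nonneg_left h1 ht0
          have := mul_le_mul_of_nonneg_left h2 (by linarith : (0:ℝ) ≤ 1 - t)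
          linarith
      _ = Complex.re (inner ℂ (B x) x : ℂ) := hre.symm
  refine le_trans hstep (le_trans ?_ (le_ciSup hbdd q.1))
  calc Complex.re (inner ℂ (B x) x : ℂ) ≤ ‖(inner ℂ (B x) x : ℂ)‖ := Complex.re_le_norm _
    _ = ‖(inner ℂ (B x) x : ℂ)‖ := rfl
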